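/- Let P be a skew-symmetric bi-vector on ℝⁿ. The polydifferential operator encoded by the wheel-type graph with value Σ (over all indices from 1 to n) ∂_m∂_n(P^{pq}) ∂_p(P^{km}) ∂_q(P^{ℓn}) ∂_k∂_ℓ(P^{ij}) ∂_i ∧ ∂_j vanishes identically, purely by the skew-symmetry P^{ab} = −P^{ba} and the symmetry of second partial derivatives. -/

import Mathlib

noncomputable def pd {n : ℕ} (i : Fin n) (f : (Fin n → ℝ) → ℝ) : (Fin n → ℝ) → ℝ :=
  fun x => fderiv ℝ f x (Pi.single i 1)

/-- The coefficient of the wheel-type graph operator: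
S^{ij} = Σ_{k,ℓ,m,n,p,q} ∂_m∂_n(P^{pq}) ∂_p(P^{km}) ∂_q(P^{ℓn}) ∂_k∂_ℓ(P^{ij}). -/
noncomputable def wheel {d : ℕ} (P : Fin d → Fin d → (Fin d → ℝ) → ℝ)
    (i j : Fin d) : (Fin d → ℝ) → ℝ :=
  fun x => ∑ k, ∑ l, ∑ m, ∑ n, ∑ p, ∑ q,
    pd m (pd n (P p q)) x * pd p (P k m) x * pd q (P l n) x * pd k (pd l (P i j)) x

lemma pd_neg {d : ℕ} (a : Fin d) (f : (Fin d → ℝ) → ℝ) (x : Fin d → ℝ) :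
    pd a (fun y => -f y) x = - pd a f x := by
  simp [pd, fderiv_neg]

lemma pd_second {d : ℕ} (a b : Fin d) (f : (Fin d → ℝ) → ℝ) (hf : ContDiff ℝ (⊤ : ℕ∞) f)
    (x : Fin d → ℝ) :
    pd a (pd b f) x = fderiv ℝ (fderiv ℝ f) x (Pi.single a 1) (Pi.single b 1) := by
  have hdf : DifferentiableAt ℝ (fderiv ℝ f) x := by
    have := (hf.fderiv_right (m := (⊤ : ℕ∞)) (by simp)).differentiable (by simp)
    exact this x
  have : pd a (pd b f) x
      = fderiv ℝ (fun y => (fderiv ℝ f y) ((fun _ : Fin d → ℝ => (Pi.single b 1 : Fin d → ℝ)) y)) x (Pi.single a 1) := rfl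
  rw [this, fderiv_clm_apply hdf (differentiableAt_const _)]
  simp

lemma pd_comm {d : ℕ} (a b : Fin d) (f : (Fin d → ℝ) → ℝ) (hf : ContDiff ℝ (⊤ : ℕ∞) f)
    (x : Fin d → ℝ) :
    pd a (pd b f) x = pd b (pd a f) x := by
  rw [pd_second a b f hf x, pd_second b a f hf x]
  exact (hf.contDiffAt.isSymmSndFDerivAt (by rw [minSmoothness_of_isRCLikeNormedField]; exact WithTop.coe_le_coe.mpr le_top)) _ _

/-- For a skew-symmetric bi-vector with smooth components, the antisymmetrization
in (i,j) of the wheel-graph operator vanishes identically, purely by skew-symmetry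
of P and symmetry of second partial derivatives. -/
theorem stmt7 {d : ℕ} (P : Fin d → Fin d → (Fin d → ℝ) → ℝ)
    (hsmooth : ∀ i j, ContDiff ℝ (⊤ : ℕ∞) (P i j))
    (hskew : ∀ i j x, P i j x = - P j i x) :
    ∀ i j : Fin d, ∀ x, (wheel P i j x - wheel P j i x) / 2 = 0 := by
  -- First: pd of skew gives negation
  have hPfun : ∀ p q : Fin d, P p q = fun y => - P q p y := fun p q => funext fun y => hskew p q y
  have hpd_skew : ∀ (a p q : Fin d) (x), pd a (P p q) x = - pd a (P q p) x := by
    intro a p q x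
    rw [hPfun p q, pd_neg]
  have hpd2_skew : ∀ (a b p q : Fin d) (x), pd a (pd b (P p q)) x = - pd a (pd b (P q p)) x := by
    intro a b p q x
    have : pd b (P p q) = fun y => - pd b (P q p) y := by
      funext y; exact hpd_skew b p q y
    rw [this, pd_neg]
  -- main: wheel vanishes
  have hwheel : ∀ i j : Fin d, ∀ x, wheel P i j x = 0 := by
    intro i j x
    have key : ∀ (T : Fin d → Fin d → Fin d → Fin d → Fin d → Fin d → ℝ),
        (∑ k, ∑ l, ∑ m, ∑ n, ∑ p, ∑ q, T k l m n p q)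
          = ∑ k, ∑ l, ∑ m, ∑ n, ∑ p, ∑ q, T l k n m q p := by
      intro T
      rw [Finset.sum_comm]
      refine Finset.sum_congr rfl fun k _ => Finset.sum_congr rfl fun l _ => ?_
      rw [Finset.sum_comm]
      refine Finset.sum_congr rfl fun m _ => Finset.sum_congr rfl fun n _ => ?_
      rw [Finset.sum_comm]
    set T : Fin d → Fin d → Fin d → Fin d → Fin d → Fin d → ℝ := fun k l m n p q =>
      pd m (pd n (P p q)) x * pd p (P k m) x * pd q (P l n) x * pd k (pd l (P i j)) x with hT
    have hterm : ∀ k l m n p q : Fin d, T l k n m q p = - T k l m n p q := by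
      intro k l m n p q
      have h1 : pd n (pd m (P q p)) x = - pd m (pd n (P p q)) x := by
        rw [pd_comm n m (P q p) (hsmooth q p) x, hpd2_skew m n q p x]
      have h2 : pd l (pd k (P i j)) x = pd k (pd l (P i j)) x :=
        pd_comm l k (P i j) (hsmooth i j) x
      simp only [hT, h1, h2]
      ring
    have hneg : wheel P i j x = - wheel P i j x := by
      have e1 : wheel P i j x = ∑ k, ∑ l, ∑ m, ∑ n, ∑ p, ∑ q, T k l m n p q := rfl
      calc wheel P i j x = ∑ k, ∑ l, ∑ m, ∑ n, ∑ p, ∑ q, T l k n m q p := by rw [e1, key T]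
        _ = ∑ k, ∑ l, ∑ m, ∑ n, ∑ p, ∑ q, -(T k l m n p q) := by
            exact Finset.sum_congr rfl fun k _ => Finset.sum_congr rfl fun l _ =>
              Finset.sum_congr rfl fun m _ => Finset.sum_congr rfl fun n _ =>
              Finset.sum_congr rfl fun p _ => Finset.sum_congr rfl fun q _ => hterm k l m n p q
        _ = - wheel P i j x := by rw [e1]; simp [Finset.sum_neg_distrib]
    linarith
  intro i j x
  rw [hwheel i j x, hwheel j i x]
  norm_num
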